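/- The dual symmetrization identity for the Izergin determinant holds: Σ_{σ ∈ Sₙ} B(σ·x̄)·G(ȳ | σ·x̄)·F(ȳ | σ·x̄) = Kₙ(ȳ | x̄), where B(x̄) = ∏_{ℓ<ℓ'} f(x_{ℓ'}, x_ℓ), G(ȳ|x̄) = ∏_ℓ g(y_ℓ, x_ℓ), F(ȳ|x̄) = ∏_{ℓ<ℓ'} f(y_ℓ, x_{ℓ'}). -/
import Mathlib


open Finset

noncomputable def fq (q u v : ℂ) : ℂ := (q * u - q⁻¹ * v) / (u - v)

noncomputable def gq (q u v : ℂ) : ℂ := (q - q⁻¹) / (u - v)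

/-- `B(ȳ) = ∏_{ℓ<ℓ'} f(y_{ℓ'}, y_ℓ)`. -/
noncomputable def Bfun (q : ℂ) {n : ℕ} (y : Fin n → ℂ) : ℂ :=
  ∏ l, ∏ l', (if l < l' then fq q (y l') (y l) else 1)

/-- `G(ȳ|x̄) = ∏_ℓ g(y_ℓ, x_ℓ)`. -/
noncomputable def Gfun (q : ℂ) {n : ℕ} (y x : Fin n → ℂ) : ℂ :=
  ∏ l, gq q (y l) (x l)

/-- `F(ȳ|x̄) = ∏_{ℓ<ℓ'} f(y_ℓ, x_{ℓ'})`. -/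
noncomputable def Ffun (q : ℂ) {n : ℕ} (y x : Fin n → ℂ) : ℂ :=
  ∏ l, ∏ l', (if l < l' then fq q (y l) (x l') else 1)

/-- The Izergin determinant `K_n(ȳ | x̄)`. -/
noncomputable def Kiz (q : ℂ) {n : ℕ} (y x : Fin n → ℂ) : ℂ :=
  ((∏ i, ∏ j, (q * y i - q⁻¹ * x j)) /
      ∏ i, ∏ j, (if i < j then (y i - y j) * (x j - x i) else 1)) *
    Matrix.det (Matrix.of fun i j : Fin n =>
      (q - q⁻¹) / ((y i - x j) * (q * y i - q⁻¹ * x j)))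

section
variable {n : ℕ}

def permE (k : Fin (n+1)) (τ : Equiv.Perm (Fin n)) : Equiv.Perm (Fin (n+1)) :=
  (finSuccEquivLast.trans (Equiv.optionCongr τ)).trans (finSuccEquiv' k).symm

@[simp] lemma permE_last (k : Fin (n+1)) (τ : Equiv.Perm (Fin n)) :
    permE k τ (Fin.last n) = k := by
  simp [permE]

@[simp] lemma permE_castSucc (k : Fin (n+1)) (τ : Equiv.Perm (Fin n)) (i : Fin n) :
    permE k τ (Fin.castSucc i) = k.succAbove (τ i) := by
  simp [permE]

lemma permE_bijective :
    Function.Bijective (fun p : Fin (n+1) × Equiv.Perm (Fin n) => permE p.1 p.2) := by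
  rw [Fintype.bijective_iff_injective_and_card]
  constructor
  · rintro ⟨k, τ⟩ ⟨k', τ'⟩ h
    simp only at h
    have hk : k = k' := by
      have := congrArg (fun σ : Equiv.Perm (Fin (n+1)) => σ (Fin.last n)) h
      simpa using this
    subst hk
    have hτ : τ = τ' := by
      ext i
      have := congrArg (fun σ : Equiv.Perm (Fin (n+1)) => σ (Fin.castSucc i)) h
      simp only [permE_castSucc] at this
      exact congrArg Fin.val (Fin.succAbove_right_injective this)
    simp [hτ]
  · simp [Fintype.card_perm, Nat.factorial_succ]

lemma sum_perm_decomp (F : Equiv.Perm (Fin (n+1)) → ℂ) :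
    ∑ σ : Equiv.Perm (Fin (n+1)), F σ
      = ∑ k : Fin (n+1), ∑ τ : Equiv.Perm (Fin n), F (permE k τ) := by
  calc ∑ σ : Equiv.Perm (Fin (n+1)), F σ
      = ∑ p : Fin (n+1) × Equiv.Perm (Fin n), F (permE p.1 p.2) :=
        (Fintype.sum_bijective _ permE_bijective _ _ (fun p => rfl)).symm
    _ = ∑ k : Fin (n+1), ∑ τ : Equiv.Perm (Fin n), F (permE k τ) := Fintype.sum_prod_type _

lemma Bfun_split (q : ℂ) (z : Fin (n+1) → ℂ) :
    Bfun q z = Bfun q (z ∘ Fin.castSucc) * ∏ l : Fin n, fq q (z (Fin.last n)) (z (Fin.castSucc l)) := by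
  unfold Bfun
  rw [Fin.prod_univ_castSucc]
  have h1 : ∀ l : Fin (n+1), (∏ l' : Fin (n+1), if l < l' then fq q (z l') (z l) else 1)
      = (∏ l' : Fin n, if l < Fin.castSucc l' then fq q (z (Fin.castSucc l')) (z l) else 1)
        * (if l < Fin.last n then fq q (z (Fin.last n)) (z l) else 1) := fun l =>
    Fin.prod_univ_castSucc _
  simp only [h1]
  rw [Finset.prod_mul_distrib]
  have h2 : ∀ l' : Fin n, ¬ (Fin.last n < Fin.castSucc l') := fun l' =>
    not_lt.2 (Fin.castSucc_lt_last l').le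
  simp [Fin.castSucc_lt_castSucc_iff, Fin.castSucc_lt_last, h2, lt_irrefl, Function.comp]

lemma Ffun_split (q : ℂ) (y x : Fin (n+1) → ℂ) :
    Ffun q y x = Ffun q (y ∘ Fin.castSucc) (x ∘ Fin.castSucc)
      * ∏ l : Fin n, fq q (y (Fin.castSucc l)) (x (Fin.last n)) := by
  unfold Ffun
  rw [Fin.prod_univ_castSucc]
  have h1 : ∀ l : Fin (n+1), (∏ l' : Fin (n+1), if l < l' then fq q (y l) (x l') else 1)
      = (∏ l' : Fin n, if l < Fin.castSucc l' then fq q (y l) (x (Fin.castSucc l')) else 1)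
        * (if l < Fin.last n then fq q (y l) (x (Fin.last n)) else 1) := fun l =>
    Fin.prod_univ_castSucc _
  simp only [h1]
  rw [Finset.prod_mul_distrib]
  have h2 : ∀ l' : Fin n, ¬ (Fin.last n < Fin.castSucc l') := fun l' =>
    not_lt.2 (Fin.castSucc_lt_last l').le
  simp [Fin.castSucc_lt_castSucc_iff, Fin.castSucc_lt_last, h2, lt_irrefl, Function.comp]

lemma Gfun_split (q : ℂ) (y x : Fin (n+1) → ℂ) :
    Gfun q y x = Gfun q (y ∘ Fin.castSucc) (x ∘ Fin.castSucc) * gq q (y (Fin.last n)) (x (Fin.last n)) := by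
  unfold Gfun
  rw [Fin.prod_univ_castSucc]
  rfl

end

section
variable {n : ℕ}

lemma prod_erase_succAbove (k : Fin (n+1)) (h : Fin (n+1) → ℂ) :
    ∏ j ∈ univ.erase k, h j = ∏ l : Fin n, h (k.succAbove l) := by
  rw [Fin.univ_succAbove, Finset.erase_cons, Finset.prod_map]
  rfl

lemma prod_sign_ite (n k : ℕ) :
    ∏ b : Fin n, (if k ≤ (b : ℕ) then (-1 : ℂ) else 1) = (-1) ^ (n - k) := by
  induction n with
  | zero => simp [Nat.zero_sub]
  | succ n ih =>
    rw [Fin.prod_univ_castSucc]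
    simp only [Fin.coe_castSucc, Fin.val_last]
    rw [ih]
    rcases le_or_gt k n with h | h
    · rw [if_pos h, show n + 1 - k = (n - k) + 1 from by omega]
      try ring
    · rw [if_neg (by omega), Nat.sub_eq_zero_of_le (by omega),
        Nat.sub_eq_zero_of_le (by omega)]
      simp

lemma prod_ite_mul {m : ℕ} (g h : Fin m → Fin m → ℂ) :
    ∏ i, ∏ j, (if i < j then g i j * h i j else 1)
      = (∏ i, ∏ j, (if i < j then g i j else 1)) *
          ∏ i, ∏ j, (if i < j then h i j else 1) := by
  rw [← Finset.prod_mul_distrib]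
  refine Finset.prod_congr rfl fun i _ => ?_
  rw [← Finset.prod_mul_distrib]
  refine Finset.prod_congr rfl fun j _ => ?_
  split <;> simp

lemma ypart_split (y : Fin (n+1) → ℂ) :
    ∏ i, ∏ j, (if i < j then y i - y j else 1)
      = (∏ i : Fin n, ∏ j : Fin n,
          (if i < j then y (Fin.castSucc i) - y (Fin.castSucc j) else 1))
        * ∏ i : Fin n, (y (Fin.castSucc i) - y (Fin.last n)) := by
  rw [Fin.prod_univ_castSucc]
  have h1 : ∀ l : Fin (n+1), (∏ j : Fin (n+1), if l < j then y l - y j else 1)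
      = (∏ j : Fin n, if l < Fin.castSucc j then y l - y (Fin.castSucc j) else 1)
        * (if l < Fin.last n then y l - y (Fin.last n) else 1) := fun l =>
    Fin.prod_univ_castSucc _
  simp only [h1]
  rw [Finset.prod_mul_distrib]
  have h2 : ∀ l' : Fin n, ¬ (Fin.last n < Fin.castSucc l') := fun l' =>
    not_lt.2 (Fin.castSucc_lt_last l').le
  simp [Fin.castSucc_lt_castSucc_iff, Fin.castSucc_lt_last, h2, lt_irrefl]

lemma vandermonde_split (k : Fin (n+1)) (x : Fin (n+1) → ℂ) :
    (∏ i, ∏ j, (if i < j then x j - x i else 1))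
      = (-1) ^ (n + (k : ℕ)) * (∏ l : Fin n, (x k - x (k.succAbove l)))
        * ∏ i : Fin n, ∏ j : Fin n,
            (if i < j then x (k.succAbove j) - x (k.succAbove i) else 1) := by
  rw [Fin.prod_univ_succAbove (fun i => ∏ j, (if i < j then x j - x i else 1)) k]
  have h1 : ∀ i : Fin (n+1), (∏ j : Fin (n+1), if i < j then x j - x i else 1)
      = (if i < k then x k - x i else 1)
        * ∏ b : Fin n, (if i < k.succAbove b then x (k.succAbove b) - x i else 1) := fun i =>
    Fin.prod_univ_succAbove _ k
  simp only [h1]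
  rw [if_neg (lt_irrefl k), one_mul, Finset.prod_mul_distrib]
  have key : ∀ b : Fin n,
      (if k < k.succAbove b then x (k.succAbove b) - x k else 1)
        * (if k.succAbove b < k then x k - x (k.succAbove b) else 1)
      = (if (k : ℕ) ≤ (b : ℕ) then (-1 : ℂ) else 1) * (x k - x (k.succAbove b)) := by
    intro b
    rcases lt_or_ge (b : ℕ) (k : ℕ) with h | h
    · have hcast : Fin.castSucc b < k := by
        rw [Fin.lt_def]; simpa using h
      have hsa : k.succAbove b = Fin.castSucc b := Fin.succAbove_of_castSucc_lt _ _ hcast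
      rw [hsa, if_pos hcast, if_neg (by simp only [Fin.lt_def, Fin.coe_castSucc]; omega),
        if_neg (by omega)]
      try ring
    · have hle : k ≤ Fin.castSucc b := by
        rw [Fin.le_def]; simpa using h
      have hsa : k.succAbove b = Fin.succ b := Fin.succAbove_of_le_castSucc _ _ hle
      have hlt : k < k.succAbove b := by
        rw [hsa, Fin.lt_def]; simp only [Fin.val_succ]; omega
      rw [if_pos hlt, if_neg (by rw [hsa, Fin.lt_def]; simp only [Fin.val_succ]; omega), if_pos h]
      try ring
  calc (∏ b : Fin n, if k < k.succAbove b then x (k.succAbove b) - x k else 1)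
        * ((∏ a : Fin n, if k.succAbove a < k then x k - x (k.succAbove a) else 1)
          * ∏ a : Fin n, ∏ b : Fin n,
              (if k.succAbove a < k.succAbove b then x (k.succAbove b) - x (k.succAbove a) else 1))
      = (∏ b : Fin n, ((if k < k.succAbove b then x (k.succAbove b) - x k else 1)
          * (if k.succAbove b < k then x k - x (k.succAbove b) else 1)))
        * ∏ a : Fin n, ∏ b : Fin n,
            (if k.succAbove a < k.succAbove b then x (k.succAbove b) - x (k.succAbove a) else 1) := by
        rw [Finset.prod_mul_distrib]; ring
    _ = ((-1) ^ (n - (k : ℕ)) * ∏ b : Fin n, (x k - x (k.succAbove b)))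
        * ∏ i : Fin n, ∏ j : Fin n,
            (if i < j then x (k.succAbove j) - x (k.succAbove i) else 1) := by
        simp only [key, Fin.succAbove_lt_succAbove_iff]
        rw [Finset.prod_mul_distrib, prod_sign_ite]
        try ring
    _ = (-1) ^ (n + (k : ℕ)) * (∏ l : Fin n, (x k - x (k.succAbove l)))
        * ∏ i : Fin n, ∏ j : Fin n,
            (if i < j then x (k.succAbove j) - x (k.succAbove i) else 1) := by
        have hk : (k : ℕ) ≤ n := Fin.is_le k
        have : (-1 : ℂ) ^ (n - (k : ℕ)) = (-1) ^ (n + (k : ℕ)) := by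
          rw [show n + (k : ℕ) = (n - (k : ℕ)) + 2 * (k : ℕ) from by omega, pow_add]
          simp [pow_mul]
        rw [this]

end

section main
open Polynomial

noncomputable def Uc (q : ℂ) {n : ℕ} (y x : Fin (n+1) → ℂ) (k : Fin (n+1)) : ℂ :=
  (q - q⁻¹) * (∏ l : Fin n, fq q (x k) (x (k.succAbove l))) *
    ((∏ l : Fin n, fq q (y (Fin.castSucc l)) (x k)) *
      Kiz q (y ∘ Fin.castSucc) (x ∘ k.succAbove))

noncomputable def kapC (q : ℂ) {n : ℕ} (y x : Fin (n+1) → ℂ) : ℂ :=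
  (∏ i : Fin n, ∏ j : Fin (n+1), (q * y (Fin.castSucc i) - q⁻¹ * x j)) /
    ((∏ i : Fin n, ∏ j : Fin n,
        (if i < j then y (Fin.castSucc i) - y (Fin.castSucc j) else 1)) *
      ∏ i : Fin (n+1), ∏ j : Fin (n+1), (if i < j then x j - x i else 1))

noncomputable def Pmat (q : ℂ) {n : ℕ} (y x : Fin (n+1) → ℂ) :
    Matrix (Fin (n+1)) (Fin (n+1)) (Polynomial ℂ) :=
  Matrix.updateRow
    (Matrix.of fun i j => C ((q - q⁻¹) / ((y i - x j) * (q * y i - q⁻¹ * x j))))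
    (Fin.last n)
    (fun j => C (q - q⁻¹) *
      ∏ j' ∈ univ.erase j, ((X - C (x j')) * (C q * X - C (q⁻¹ * x j'))))

noncomputable def Ppoly (q : ℂ) {n : ℕ} (y x : Fin (n+1) → ℂ) : Polynomial ℂ :=
  (∏ i : Fin n, (C (y (Fin.castSucc i)) - X)) *
    ∑ k : Fin (n+1), C (Uc q y x k) * ∏ j ∈ univ.erase k, (X - C (x j))

noncomputable def Qpoly (q : ℂ) {n : ℕ} (y x : Fin (n+1) → ℂ) : Polynomial ℂ :=
  C (kapC q y x) * (Pmat q y x).det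

variable (q : ℂ) {n : ℕ} (y x : Fin (n+1) → ℂ)

lemma iteprod_ne_zero {m : ℕ} (g : Fin m → Fin m → ℂ) (h : ∀ i j, i < j → g i j ≠ 0) :
    (∏ i, ∏ j, (if i < j then g i j else 1)) ≠ 0 := by
  rw [Finset.prod_ne_zero_iff]
  intro i _
  rw [Finset.prod_ne_zero_iff]
  intro j _
  split
  · exact h i j (by assumption)
  · exact one_ne_zero

lemma Ppoly_natDegree_le : (Ppoly q y x).natDegree ≤ 2 * n := by
  unfold Ppoly
  refine natDegree_mul_le.trans ?_
  have h1 : (∏ i : Fin n, (C (y (Fin.castSucc i)) - X)).natDegree ≤ n := by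
    refine (Polynomial.natDegree_prod_le _ _).trans ?_
    refine (Finset.sum_le_card_nsmul _ _ 1 ?_).trans (by simp)
    intro i _
    exact (Polynomial.natDegree_sub_le _ _).trans (by simp)
  have h2 : (∑ k : Fin (n+1), C (Uc q y x k) *
      ∏ j ∈ univ.erase k, (X - C (x j))).natDegree ≤ n := by
    refine Polynomial.natDegree_sum_le_of_forall_le _ _ ?_
    intro k _
    refine (Polynomial.natDegree_C_mul_le _ _).trans ?_
    refine (Polynomial.natDegree_prod_le _ _).trans ?_
    refine (Finset.sum_le_card_nsmul _ _ 1 ?_).trans ?_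
    · intro j _; exact (Polynomial.natDegree_sub_le _ _).trans (by simp)
    · simp [Finset.card_erase_of_mem]
  omega

lemma Qpoly_natDegree_le : (Qpoly q y x).natDegree ≤ 2 * n := by
  unfold Qpoly Pmat
  refine natDegree_mul_le.trans ?_
  rw [natDegree_C]
  rw [Matrix.det_apply']
  have hb : (∑ σ : Equiv.Perm (Fin (n+1)), ((Equiv.Perm.sign σ : ℤ) : Polynomial ℂ) *
      ∏ i, (Matrix.updateRow
        (Matrix.of fun i j => C ((q - q⁻¹) / ((y i - x j) * (q * y i - q⁻¹ * x j))))
        (Fin.last n)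
        (fun j => C (q - q⁻¹) *
          ∏ j' ∈ univ.erase j, ((X - C (x j')) * (C q * X - C (q⁻¹ * x j'))))) (σ i) i).natDegree
      ≤ 2 * n := by
    refine Polynomial.natDegree_sum_le_of_forall_le _ _ ?_
    intro σ _
    refine natDegree_mul_le.trans ?_
    rw [Polynomial.natDegree_intCast]
    rw [Nat.zero_add]
    refine (Polynomial.natDegree_prod_le _ _).trans ?_
    have hentry : ∀ i : Fin (n+1),
        ((Matrix.updateRow
          (Matrix.of fun i j => C ((q - q⁻¹) / ((y i - x j) * (q * y i - q⁻¹ * x j))))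
          (Fin.last n)
          (fun j => C (q - q⁻¹) *
            ∏ j' ∈ univ.erase j, ((X - C (x j')) * (C q * X - C (q⁻¹ * x j')))) (σ i) i)).natDegree
          ≤ if σ i = Fin.last n then 2*n else 0 := by
      intro i
      by_cases hi : σ i = Fin.last n
      · rw [if_pos hi, hi, Matrix.updateRow_self]
        refine (Polynomial.natDegree_C_mul_le _ _).trans ?_
        refine (Polynomial.natDegree_prod_le _ _).trans ?_
        refine (Finset.sum_le_card_nsmul _ _ 2 ?_).trans ?_
        · intro j _
          refine natDegree_mul_le.trans ?_
          have e1 : (X - C (x j)).natDegree ≤ 1 := natDegree_X_sub_C_le _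
          have e2 : (C q * X - C (q⁻¹ * x j)).natDegree ≤ 1 := by
            refine (Polynomial.natDegree_sub_le _ _).trans ?_
            simp only [natDegree_C, max_le_iff]
            exact ⟨(Polynomial.natDegree_C_mul_le _ _).trans (by simp), by omega⟩
          omega
        · simp [Finset.card_erase_of_mem]; omega
      · rw [if_neg hi, Matrix.updateRow_ne hi]
        simp
    calc ∑ i, _ ≤ ∑ i : Fin (n+1), (if σ i = Fin.last n then 2*n else 0) :=
          Finset.sum_le_sum (fun i _ => hentry i)
      _ = 2 * n := by
          simp only [Equiv.apply_eq_iff_eq_symm_apply]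
          rw [Finset.sum_ite_eq' univ (σ.symm (Fin.last n)) (fun _ => 2*n)]
          simp
  omega

lemma Pmat_eval (t : ℂ) : (Pmat q y x).map (Polynomial.evalRingHom t)
    = Matrix.updateRow
        (Matrix.of fun i j => ((q - q⁻¹) / ((y i - x j) * (q * y i - q⁻¹ * x j))))
        (Fin.last n)
        (fun j => (q - q⁻¹) * ∏ j' ∈ univ.erase j, ((t - x j') * (q * t - q⁻¹ * x j'))) := by
  unfold Pmat
  rw [Matrix.map_updateRow]
  ext i j
  rcases eq_or_ne i (Fin.last n) with h | h
  · subst h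
    rw [Matrix.updateRow_self, Matrix.updateRow_self]
    simp [Function.comp, Polynomial.eval_prod]
  · rw [Matrix.updateRow_ne h, Matrix.updateRow_ne h]
    simp

lemma det_Pmat_eval (t : ℂ) : Polynomial.eval t (Pmat q y x).det
    = (Matrix.updateRow
        (Matrix.of fun i j => ((q - q⁻¹) / ((y i - x j) * (q * y i - q⁻¹ * x j))))
        (Fin.last n)
        (fun j => (q - q⁻¹) * ∏ j' ∈ univ.erase j, ((t - x j') * (q * t - q⁻¹ * x j')))).det := by
  rw [← Pmat_eval, ← RingHom.mapMatrix_apply, ← RingHom.map_det]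
  rfl

lemma Ppoly_eval_y (i : Fin n) : (Ppoly q y x).eval (y (Fin.castSucc i)) = 0 := by
  unfold Ppoly
  rw [eval_mul, Polynomial.eval_prod]
  apply mul_eq_zero_of_left
  apply Finset.prod_eq_zero (Finset.mem_univ i)
  simp

lemma Qpoly_eval_y (hxy : ∀ i j, x i ≠ y j) (hgen : ∀ i j, q * y i ≠ q⁻¹ * x j) (i : Fin n) :
    (Qpoly q y x).eval (y (Fin.castSucc i)) = 0 := by
  unfold Qpoly
  rw [eval_mul, eval_C]
  apply mul_eq_zero_of_right
  rw [det_Pmat_eval]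
  have hrow : (fun j => (q - q⁻¹) * ∏ j' ∈ univ.erase j,
        ((y (Fin.castSucc i) - x j') * (q * y (Fin.castSucc i) - q⁻¹ * x j')))
      = (∏ j' : Fin (n+1), ((y (Fin.castSucc i) - x j') * (q * y (Fin.castSucc i) - q⁻¹ * x j'))) •
        ((Matrix.of fun i' j => ((q - q⁻¹) / ((y i' - x j) * (q * y i' - q⁻¹ * x j))))
          (Fin.castSucc i)) := by
    funext j
    have h1 : y (Fin.castSucc i) - x j ≠ 0 := sub_ne_zero_of_ne ((hxy j (Fin.castSucc i)).symm)
    have h2 : q * y (Fin.castSucc i) - q⁻¹ * x j ≠ 0 := sub_ne_zero_of_ne (hgen (Fin.castSucc i) j)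
    rw [Pi.smul_apply, smul_eq_mul,
      ← Finset.mul_prod_erase _ _ (Finset.mem_univ j)]
    simp only [Matrix.of_apply]
    have hg : (y (Fin.castSucc i) - x j) * (q * y (Fin.castSucc i) - q⁻¹ * x j) ≠ 0 :=
      mul_ne_zero h1 h2
    symm
    calc ((y (Fin.castSucc i) - x j) * (q * y (Fin.castSucc i) - q⁻¹ * x j) *
          ∏ j' ∈ univ.erase j,
            ((y (Fin.castSucc i) - x j') * (q * y (Fin.castSucc i) - q⁻¹ * x j'))) *
          ((q - q⁻¹) / ((y (Fin.castSucc i) - x j) * (q * y (Fin.castSucc i) - q⁻¹ * x j)))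
        = ((q - q⁻¹) / ((y (Fin.castSucc i) - x j) * (q * y (Fin.castSucc i) - q⁻¹ * x j)) *
            ((y (Fin.castSucc i) - x j) * (q * y (Fin.castSucc i) - q⁻¹ * x j))) *
          ∏ j' ∈ univ.erase j,
            ((y (Fin.castSucc i) - x j') * (q * y (Fin.castSucc i) - q⁻¹ * x j')) := by ring
      _ = (q - q⁻¹) * ∏ j' ∈ univ.erase j,
            ((y (Fin.castSucc i) - x j') * (q * y (Fin.castSucc i) - q⁻¹ * x j')) := by
          rw [div_mul_cancel₀ _ hg]
  rw [hrow, Matrix.det_updateRow_smul]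
  apply mul_eq_zero_of_right
  apply Matrix.det_zero_of_row_eq (show Fin.castSucc i ≠ Fin.last n from (Fin.castSucc_lt_last i).ne)
  rw [Matrix.updateRow_self, Matrix.updateRow_ne (show Fin.castSucc i ≠ Fin.last n from (Fin.castSucc_lt_last i).ne)]

lemma Ppoly_eval_x (k : Fin (n+1)) :
    (Ppoly q y x).eval (x k)
      = (∏ i : Fin n, (y (Fin.castSucc i) - x k)) *
          (Uc q y x k * ∏ j ∈ univ.erase k, (x k - x j)) := by
  unfold Ppoly
  rw [eval_mul, Polynomial.eval_prod, eval_finset_sum]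
  congr 1
  · exact Finset.prod_congr rfl (by simp)
  · rw [Finset.sum_eq_single k]
    · simp [Polynomial.eval_prod]
    · intro b _ hbk
      rw [eval_mul, Polynomial.eval_prod]
      apply mul_eq_zero_of_right
      apply Finset.prod_eq_zero (Finset.mem_erase.2 ⟨hbk.symm, Finset.mem_univ k⟩)
      simp
    · intro h; exact absurd (Finset.mem_univ k) h

lemma Qpoly_eval_x (hx : Function.Injective x) (hy : Function.Injective y)
    (hxy : ∀ i j, x i ≠ y j) (k : Fin (n+1)) :
    (Qpoly q y x).eval (x k)
      = (∏ i : Fin n, (y (Fin.castSucc i) - x k)) *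
          (Uc q y x k * ∏ j ∈ univ.erase k, (x k - x j)) := by
  unfold Qpoly
  rw [eval_mul, eval_C, det_Pmat_eval]
  rw [Matrix.det_succ_row _ (Fin.last n)]
  rw [Finset.sum_eq_single k]
  rotate_left
  · intro j _ hjk
    apply mul_eq_zero_of_left
    apply mul_eq_zero_of_right
    rw [Matrix.updateRow_self]
    apply mul_eq_zero_of_right
    apply Finset.prod_eq_zero (Finset.mem_erase.2 ⟨hjk.symm, Finset.mem_univ k⟩)
    simp
  · intro h; exact absurd (Finset.mem_univ k) h
  rw [Matrix.updateRow_self]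
  have hminor : (Matrix.updateRow
        (Matrix.of fun i j => ((q - q⁻¹) / ((y i - x j) * (q * y i - q⁻¹ * x j))))
        (Fin.last n)
        (fun j => (q - q⁻¹) * ∏ j' ∈ univ.erase j,
          ((x k - x j') * (q * x k - q⁻¹ * x j')))).submatrix
          (Fin.last n).succAbove k.succAbove
      = Matrix.of (fun i j : Fin n => (q - q⁻¹) /
          (((y ∘ Fin.castSucc) i - (x ∘ k.succAbove) j) *
            (q * (y ∘ Fin.castSucc) i - q⁻¹ * (x ∘ k.succAbove) j))) := by
    ext i j
    rw [Matrix.submatrix_apply, Fin.succAbove_last,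
      Matrix.updateRow_ne (show Fin.castSucc i ≠ Fin.last n from (Fin.castSucc_lt_last i).ne)]
    simp [Function.comp]
  rw [hminor]
  unfold Uc Kiz
  simp only [Function.comp_apply]
  -- now scalar manipulations
  unfold kapC
  rw [prod_ite_mul (fun i j : Fin n => y (Fin.castSucc i) - y (Fin.castSucc j))
    (fun i j : Fin n => x (k.succAbove j) - x (k.succAbove i))]
  rw [prod_erase_succAbove k (fun j => (x k - x j) * (q * x k - q⁻¹ * x j)),
    prod_erase_succAbove k (fun j => x k - x j),
    Finset.prod_mul_distrib]
  unfold fq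
  rw [Finset.prod_div_distrib (f := fun l => q * x k - q⁻¹ * x (k.succAbove l)),
    Finset.prod_div_distrib (f := fun l => q * y (Fin.castSucc l) - q⁻¹ * x k)]
  have hAy : (∏ i : Fin n, ∏ j : Fin (n+1), (q * y (Fin.castSucc i) - q⁻¹ * x j))
      = (∏ i : Fin n, (q * y (Fin.castSucc i) - q⁻¹ * x k)) *
          ∏ i : Fin n, ∏ j : Fin n, (q * y (Fin.castSucc i) - q⁻¹ * x (k.succAbove j)) := by
    rw [← Finset.prod_mul_distrib]
    refine Finset.prod_congr rfl fun i _ => ?_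
    exact Fin.prod_univ_succAbove (fun j => q * y (Fin.castSucc i) - q⁻¹ * x j) k
  rw [hAy, vandermonde_split k x]
  -- nonzero facts
  have hPe : (∏ i : Fin n, (y (Fin.castSucc i) - x k)) ≠ 0 := by
    rw [Finset.prod_ne_zero_iff]
    exact fun i _ => sub_ne_zero_of_ne (hxy k (Fin.castSucc i)).symm
  have hb : (∏ l : Fin n, (x k - x (k.succAbove l))) ≠ 0 := by
    rw [Finset.prod_ne_zero_iff]
    exact fun l _ => sub_ne_zero_of_ne (fun h => (Fin.succAbove_ne k l) (hx h.symm))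
  have hWy : (∏ i : Fin n, ∏ j : Fin n,
      (if i < j then y (Fin.castSucc i) - y (Fin.castSucc j) else 1)) ≠ 0 := by
    apply iteprod_ne_zero
    intro i j hij
    exact sub_ne_zero_of_ne (fun h => hij.ne (Fin.castSucc_injective n (hy h)))
  have hWx : (∏ i : Fin n, ∏ j : Fin n,
      (if i < j then x (k.succAbove j) - x (k.succAbove i) else 1)) ≠ 0 := by
    apply iteprod_ne_zero
    intro i j hij
    exact sub_ne_zero_of_ne
      (fun h => hij.ne' (Fin.succAbove_right_injective (hx h)))
  have hsgn : ((-1 : ℂ)) ^ (n + (k : ℕ)) ≠ 0 := pow_ne_zero _ (by norm_num)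
  have hlastval : ((Fin.last n : Fin (n+1)) : ℕ) = n := rfl
  rw [hlastval]
  field_simp

lemma Ppoly_eq_Qpoly (hx : Function.Injective x) (hy : Function.Injective y)
    (hxy : ∀ i j, x i ≠ y j) (hgen : ∀ i j, q * y i ≠ q⁻¹ * x j) :
    Ppoly q y x = Qpoly q y x := by
  have hyc : Function.Injective (y ∘ Fin.castSucc) := hy.comp (Fin.castSucc_injective n)
  set S : Finset ℂ := (univ.image x) ∪ (univ.image (y ∘ Fin.castSucc)) with hS
  have hdisj : Disjoint (univ.image x) (univ.image (y ∘ Fin.castSucc)) := by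
    rw [Finset.disjoint_left]
    rintro a ha hb
    obtain ⟨k, _, rfl⟩ := Finset.mem_image.1 ha
    obtain ⟨i, _, hi⟩ := Finset.mem_image.1 hb
    exact hxy k (Fin.castSucc i) hi.symm
  have hcard : S.card = 2 * n + 1 := by
    rw [hS, Finset.card_union_of_disjoint hdisj,
      Finset.card_image_of_injective _ hx, Finset.card_image_of_injective _ hyc]
    simp; omega
  have hsub : Ppoly q y x - Qpoly q y x = 0 := by
    apply Polynomial.eq_zero_of_natDegree_lt_card_of_eval_eq_zero' _ S
    · intro t ht
      rw [Polynomial.eval_sub, sub_eq_zero]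
      rw [hS, Finset.mem_union] at ht
      rcases ht with ht | ht
      · obtain ⟨k, _, rfl⟩ := Finset.mem_image.1 ht
        rw [Ppoly_eval_x q y x k, Qpoly_eval_x q y x hx hy hxy k]
      · obtain ⟨i, _, rfl⟩ := Finset.mem_image.1 ht
        rw [Function.comp_apply, Ppoly_eval_y q y x i, Qpoly_eval_y q y x hxy hgen i]
    · rw [hcard]
      have := Polynomial.natDegree_sub_le (Ppoly q y x) (Qpoly q y x)
      have h1 := Ppoly_natDegree_le q y x
      have h2 := Qpoly_natDegree_le q y x
      omega
  exact sub_eq_zero.1 hsub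


lemma Ppoly_eval_last :
    (Ppoly q y x).eval (y (Fin.last n))
      = (∏ i : Fin n, (y (Fin.castSucc i) - y (Fin.last n))) *
          ∑ k : Fin (n+1), Uc q y x k * ∏ j ∈ univ.erase k, (y (Fin.last n) - x j) := by
  unfold Ppoly
  rw [eval_mul, Polynomial.eval_prod, eval_finset_sum]
  congr 1
  · exact Finset.prod_congr rfl (by simp)
  · exact Finset.sum_congr rfl (by intros; simp [Polynomial.eval_prod])

lemma Qpoly_eval_last (hx : Function.Injective x) (hy : Function.Injective y)
    (hxy : ∀ i j, x i ≠ y j) (hgen : ∀ i j, q * y i ≠ q⁻¹ * x j) :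
    (Qpoly q y x).eval (y (Fin.last n))
      = Kiz q y x * ((∏ i : Fin n, (y (Fin.castSucc i) - y (Fin.last n))) *
          ∏ j : Fin (n+1), (y (Fin.last n) - x j)) := by
  unfold Qpoly
  rw [eval_mul, eval_C, det_Pmat_eval]
  have hrow : (fun j => (q - q⁻¹) * ∏ j' ∈ univ.erase j,
        ((y (Fin.last n) - x j') * (q * y (Fin.last n) - q⁻¹ * x j')))
      = (∏ j' : Fin (n+1), ((y (Fin.last n) - x j') * (q * y (Fin.last n) - q⁻¹ * x j'))) •
        ((Matrix.of fun i' j => ((q - q⁻¹) / ((y i' - x j) * (q * y i' - q⁻¹ * x j))))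
          (Fin.last n)) := by
    funext j
    have h1 : y (Fin.last n) - x j ≠ 0 := sub_ne_zero_of_ne ((hxy j (Fin.last n)).symm)
    have h2 : q * y (Fin.last n) - q⁻¹ * x j ≠ 0 := sub_ne_zero_of_ne (hgen (Fin.last n) j)
    have hg : (y (Fin.last n) - x j) * (q * y (Fin.last n) - q⁻¹ * x j) ≠ 0 := mul_ne_zero h1 h2
    rw [Pi.smul_apply, smul_eq_mul,
      ← Finset.mul_prod_erase _ _ (Finset.mem_univ j)]
    simp only [Matrix.of_apply]
    symm
    calc ((y (Fin.last n) - x j) * (q * y (Fin.last n) - q⁻¹ * x j) *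
          ∏ j' ∈ univ.erase j,
            ((y (Fin.last n) - x j') * (q * y (Fin.last n) - q⁻¹ * x j'))) *
          ((q - q⁻¹) / ((y (Fin.last n) - x j) * (q * y (Fin.last n) - q⁻¹ * x j)))
        = ((q - q⁻¹) / ((y (Fin.last n) - x j) * (q * y (Fin.last n) - q⁻¹ * x j)) *
            ((y (Fin.last n) - x j) * (q * y (Fin.last n) - q⁻¹ * x j))) *
          ∏ j' ∈ univ.erase j,
            ((y (Fin.last n) - x j') * (q * y (Fin.last n) - q⁻¹ * x j')) := by ring
      _ = (q - q⁻¹) * ∏ j' ∈ univ.erase j,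
            ((y (Fin.last n) - x j') * (q * y (Fin.last n) - q⁻¹ * x j')) := by
          rw [div_mul_cancel₀ _ hg]
  rw [hrow, Matrix.det_updateRow_smul, Matrix.updateRow_eq_self]
  -- scalar algebra
  unfold Kiz kapC
  rw [prod_ite_mul (fun i j => y i - y j) (fun i j => x j - x i), ypart_split,
    Fin.prod_univ_castSucc
      (f := fun i => ∏ j : Fin (n+1), (q * y i - q⁻¹ * x j)),
    Finset.prod_mul_distrib]
  have hPi0 : (∏ i : Fin n, (y (Fin.castSucc i) - y (Fin.last n))) ≠ 0 := by
    rw [Finset.prod_ne_zero_iff]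
    exact fun i _ => sub_ne_zero_of_ne (fun h => (Fin.castSucc_lt_last i).ne (hy h))
  have hWy : (∏ i : Fin n, ∏ j : Fin n,
      (if i < j then y (Fin.castSucc i) - y (Fin.castSucc j) else 1)) ≠ 0 := by
    apply iteprod_ne_zero
    intro i j hij
    exact sub_ne_zero_of_ne (fun h => hij.ne (Fin.castSucc_injective n (hy h)))
  have hWx : (∏ i : Fin (n+1), ∏ j : Fin (n+1), (if i < j then x j - x i else 1)) ≠ 0 := by
    apply iteprod_ne_zero
    intro i j hij
    exact sub_ne_zero_of_ne (fun h => hij.ne' (hx h))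
  field_simp

end main

/-- Dual symmetrization identity:
`Σ_{σ∈Sₙ} B(σ·x̄) G(ȳ|σ·x̄) F(ȳ|σ·x̄) = Kₙ(ȳ|x̄)`. -/
theorem dual_sym_identity (q : ℂ) (hq : q ≠ 0) (n : ℕ) (x y : Fin n → ℂ)
    (hx : Function.Injective x) (hy : Function.Injective y)
    (hxy : ∀ i j, x i ≠ y j) (hgen : ∀ i j, q * y i ≠ q⁻¹ * x j) :
    ∑ σ : Equiv.Perm (Fin n),
        Bfun q (x ∘ σ) * Gfun q y (x ∘ σ) * Ffun q y (x ∘ σ)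
      = Kiz q y x := by
  induction n with
  | zero =>
    simp [Bfun, Gfun, Ffun, Kiz, Matrix.det_fin_zero]
  | succ n IH =>
    rw [sum_perm_decomp]
    have hxc : Function.Injective (x ∘ Fin.castSucc) := hx.comp (Fin.castSucc_injective n)
    have hyc : Function.Injective (y ∘ Fin.castSucc) := hy.comp (Fin.castSucc_injective n)
    have hBt : ∀ j : Fin (n+1), y (Fin.last n) - x j ≠ 0 :=
      fun j => sub_ne_zero_of_ne ((hxy j (Fin.last n)).symm)
    have hBtprod : (∏ j : Fin (n+1), (y (Fin.last n) - x j)) ≠ 0 :=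
      Finset.prod_ne_zero_iff.2 (fun j _ => hBt j)
    have hPi0 : (∏ i : Fin n, (y (Fin.castSucc i) - y (Fin.last n))) ≠ 0 := by
      rw [Finset.prod_ne_zero_iff]
      exact fun i _ => sub_ne_zero_of_ne (fun h => (Fin.castSucc_lt_last i).ne (hy h))
    have hstep : ∀ k : Fin (n+1), (∑ τ : Equiv.Perm (Fin n),
        (Bfun q (x ∘ (permE k τ)) * Gfun q y (x ∘ (permE k τ)) * Ffun q y (x ∘ (permE k τ))))
        = Uc q y x k / (y (Fin.last n) - x k) := by
      intro k
      have hT : ∀ τ : Equiv.Perm (Fin n),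
          Bfun q (x ∘ permE k τ) * Gfun q y (x ∘ permE k τ) * Ffun q y (x ∘ permE k τ)
          = (Bfun q ((x ∘ k.succAbove) ∘ τ) *
              Gfun q (y ∘ Fin.castSucc) ((x ∘ k.succAbove) ∘ τ) *
              Ffun q (y ∘ Fin.castSucc) ((x ∘ k.succAbove) ∘ τ))
            * ((∏ l : Fin n, fq q (x k) (x (k.succAbove l)))
              * ((∏ l : Fin n, fq q (y (Fin.castSucc l)) (x k))
                * gq q (y (Fin.last n)) (x k))) := by
        intro τ
        have hcomp : (x ∘ (permE k τ)) ∘ Fin.castSucc = ((x ∘ k.succAbove) ∘ τ) := by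
          funext i; simp [Function.comp]
        rw [Bfun_split, Gfun_split q y (x ∘ permE k τ), Ffun_split q y (x ∘ permE k τ), hcomp]
        simp only [Function.comp_apply, permE_last, permE_castSucc]
        rw [Equiv.prod_comp τ (fun l => fq q (x k) (x (k.succAbove l)))]
        ring
      rw [Finset.sum_congr rfl (fun τ _ => hT τ), ← Finset.sum_mul,
        IH (x ∘ k.succAbove) (y ∘ Fin.castSucc)
          (hx.comp Fin.succAbove_right_injective) hyc
          (fun i j => hxy (k.succAbove i) (Fin.castSucc j))
          (fun i j => hgen (Fin.castSucc i) (k.succAbove j))]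
      unfold Uc gq
      field_simp
    rw [Finset.sum_congr rfl (fun k _ => hstep k)]
    -- use the polynomial identity
    have hPQ := congrArg (Polynomial.eval (y (Fin.last n))) (Ppoly_eq_Qpoly q y x hx hy hxy hgen)
    rw [Ppoly_eval_last, Qpoly_eval_last q y x hx hy hxy hgen] at hPQ
    have hsum : (∑ k : Fin (n+1), Uc q y x k * ∏ j ∈ univ.erase k, (y (Fin.last n) - x j))
        = Kiz q y x * ∏ j : Fin (n+1), (y (Fin.last n) - x j) := by
      apply mul_left_cancel₀ hPi0
      rw [hPQ]; ring
    calc ∑ k : Fin (n+1), Uc q y x k / (y (Fin.last n) - x k)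
        = ∑ k : Fin (n+1), (Uc q y x k * ∏ j ∈ univ.erase k, (y (Fin.last n) - x j)) /
            ∏ j : Fin (n+1), (y (Fin.last n) - x j) := by
          refine Finset.sum_congr rfl fun k _ => ?_
          have herase : (∏ j ∈ univ.erase k, (y (Fin.last n) - x j)) ≠ 0 :=
            Finset.prod_ne_zero_iff.2 (fun j _ => hBt j)
          rw [← Finset.mul_prod_erase univ (fun j => y (Fin.last n) - x j) (Finset.mem_univ k),
            mul_div_mul_right _ _ herase]
      _ = (∑ k : Fin (n+1), Uc q y x k * ∏ j ∈ univ.erase k, (y (Fin.last n) - x j)) /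
            ∏ j : Fin (n+1), (y (Fin.last n) - x j) := by
          rw [Finset.sum_div]
      _ = Kiz q y x := by
          rw [hsum, mul_div_cancel_right₀ _ hBtprod]
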